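/- For a positive integer k, the compositional inverse of the series A with A(0)=0 satisfying (1+A)^k = e^{x p_k(A)}, where p_k(u) = ((1+u)^k-1)/u, is k x log(1+x)/((1+x)^k - 1); hence k x log(1+x)/((1+x)^k - 1) is a Hurwitz series. -/

import Mathlib

open PowerSeries

/-- A Hurwitz series: a formal power series `∑ f_n x^n / n!` over `ℚ` with all
`f_n = n! · (coefficient of x^n)` integers. -/
def IsHurwitz (f : PowerSeries ℚ) : Prop :=
  ∀ n : ℕ, ∃ m : ℤ, (n.factorial : ℚ) * PowerSeries.coeff n f = (m : ℚ)

/-- Composition `f(g(x))` of formal power series, valid when `g` has zero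
constant term. -/
noncomputable def PowerSeries.comp (f g : PowerSeries ℚ) : PowerSeries ℚ :=
  PowerSeries.mk fun n =>
    ∑ k ∈ Finset.range (n + 1), PowerSeries.coeff k f * PowerSeries.coeff n (g ^ k)

/-- The formal exponential `e^S` of a power series `S` with zero constant term. -/
noncomputable def PowerSeries.expOf (S : PowerSeries ℚ) : PowerSeries ℚ :=
  PowerSeries.comp (exp ℚ) S

/-- `p_k(u) = ((1+u)^k - 1)/u = ∑_{j=1}^{k} C(k,j) u^{j-1}`, evaluated at a power
series `u`. -/
noncomputable def pPoly (k : ℕ) (u : PowerSeries ℚ) : PowerSeries ℚ :=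
  ∑ j ∈ Finset.range k, PowerSeries.C (k.choose (j + 1) : ℚ) * u ^ j

/-- The formal power series `log(1+x) = ∑_{n≥1} (-1)^{n-1} x^n/n` over `ℚ`. -/
noncomputable def logOnePlusX : PowerSeries ℚ :=
  PowerSeries.mk fun n => if n = 0 then 0 else (-1 : ℚ) ^ (n - 1) / n

/-- The series `k·x·log(1+x)/((1+x)^k - 1)`, written as
`k·x·log(1+x)·(x·p_k(x))⁻¹` where `(1+x)^k - 1 = x·p_k(x)`; since `p_k(x)` has
constant term `k ≠ 0` this equals `k·log(1+x)·p_k(x)⁻¹`. -/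
noncomputable def invSeries (k : ℕ) : PowerSeries ℚ :=
  PowerSeries.C (k : ℚ) * logOnePlusX * (pPoly k PowerSeries.X)⁻¹

/-!
Let `L = k·log(1+x)/p_k(x)`. Taking logarithms in `(1+A)^k = e^{x p_k(A)}` gives
`k·log(1+A) = x·p_k(A)`: the logarithm turns powers into multiples and inverts the exponential,
both seen by comparing derivatives. Substituting `A` into `L·p_k(x) = k·log(1+x)` then gives
`L(A)·p_k(A) = x·p_k(A)`, so `L(A) = x`, and a one-sided compositional inverse is two-sided.

For integrality write `log(1+x) = x·F(x)`, so `F = ∑ (-1)^m x^m/(m+1)`. With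
`Y = x·p_k(x) = (1+x)^k - 1` we get `L·p_k(x) = log(1+Y) = Y·F(Y)`, i.e. `L = x·F(Y)`. As `Y` has
integer coefficients, `n!·[x^n] L = ∑_{m<n} (-1)^m (n!/(m+1))·[x^(n-1)] Y^m` is an integer.
-/

namespace PowerSeries

section CommRing

variable {R : Type*} [CommRing R]

theorem coeff_pow_eq_zero_of_lt {g : R⟦X⟧} (hg : constantCoeff g = 0) {n d : ℕ} (h : n < d) :
    coeff n (g ^ d) = 0 :=
  X_pow_dvd_iff.mp (pow_dvd_pow_of_dvd (X_dvd_iff.mpr hg) d) n h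

theorem constantCoeff_subst_of_constantCoeff_eq_zero {f a : R⟦X⟧} (ha : constantCoeff a = 0) :
    constantCoeff (f.subst a) = constantCoeff f := by
  rw [← coeff_zero_eq_constantCoeff_apply, coeff_subst' (HasSubst.of_constantCoeff_zero' ha),
    finsum_eq_single _ 0]
  · simp
  · intro d hd
    simp [coeff_zero_eq_constantCoeff_apply, ha, hd]

theorem coeff_one_subst {f g : R⟦X⟧} (hg : constantCoeff g = 0) :
    coeff 1 (f.subst g) = coeff 1 f * coeff 1 g := by
  rw [coeff_subst' (HasSubst.of_constantCoeff_zero' hg), finsum_eq_single _ 1]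
  · simp
  · rintro (_ | _ | d) hd
    · simp
    · exact absurd rfl hd
    · rw [coeff_pow_eq_zero_of_lt hg (by omega), smul_zero]

theorem subst_eq_X_of_subst_eq_X {f g : R⟦X⟧} (hg : constantCoeff g = 0) (h : f.subst g = X) :
    g.subst f = X := by
  have hu : IsUnit (coeff 1 g) :=
    IsUnit.of_mul_eq_one_right _ (by rw [← coeff_one_subst hg, h, coeff_X, if_pos rfl])
  have hQ : HasSubst (g.substInvOfIsUnit hu) := HasSubst.substInvOfIsUnit g hu
  have hfQ : f = g.substInvOfIsUnit hu := by
    rw [← X_subst f, ← subst_substInvOfIsUnit_right g hg hu,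
      ← subst_comp_subst_apply (HasSubst.of_constantCoeff_zero' hg) hQ, h, subst_X hQ]
  rw [hfQ, subst_substInvOfIsUnit_right g hg hu]

end CommRing

section Log

variable {A : Type*} [CommRing A] [Algebra ℚ A]

theorem mk_neg_one_pow_mul_one_add_X :
    (mk fun n ↦ algebraMap ℚ A ((-1 : ℚ) ^ n)) * (1 + X) = 1 := by
  ext (_ | n)
  · simp
  · simp [mul_add, coeff_succ_mul_X, pow_succ]

theorem derivative_logOf_mul_self {f : A⟦X⟧} (hf : constantCoeff f = 1) :
    d⁄dX A (logOf f) * f = d⁄dX A f := by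
  have hsub : HasSubst (f - 1) := HasSubst.of_constantCoeff_zero' (by simp [hf])
  have hgeom := congrArg (substAlgHom hsub) (mk_neg_one_pow_mul_one_add_X (A := A))
  rw [map_mul, map_add, map_one, substAlgHom_X, coe_substAlgHom, add_sub_cancel] at hgeom
  rw [logOf, derivative_subst hsub, deriv_log, map_sub, derivative_one, sub_zero]
  linear_combination d⁄dX A f * hgeom

theorem logOf_eq_of_derivative_eq_mul {f g : A⟦X⟧} (hf : constantCoeff f = 1)
    (hg : constantCoeff g = 0) (h : d⁄dX A f = f * d⁄dX A g) : logOf f = g := by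
  have : IsAddTorsionFree A := .of_module_rat A
  refine derivative.ext ?_ (by rw [constantCoeff_logOf hf, hg])
  rw [← (isUnit_iff_constantCoeff.mpr (by rw [hf]; exact isUnit_one)).mul_left_inj,
    derivative_logOf_mul_self hf, h, mul_comm]

theorem logOf_one_add (u : A⟦X⟧) : logOf (1 + u) = (log A).subst u := by
  rw [logOf, add_sub_cancel_left]

theorem logOf_mul {f g : A⟦X⟧} (hf : constantCoeff f = 1) (hg : constantCoeff g = 1) :
    logOf (f * g) = logOf f + logOf g := by
  refine logOf_eq_of_derivative_eq_mul (by simp [hf, hg])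
    (by simp [constantCoeff_logOf hf, constantCoeff_logOf hg]) ?_
  rw [Derivation.leibniz, map_add, ← derivative_logOf_mul_self hf,
    ← derivative_logOf_mul_self hg, smul_eq_mul, smul_eq_mul]
  ring

theorem logOf_one : logOf (1 : A⟦X⟧) = 0 := by
  rw [logOf, sub_self, subst_zero_of_constantCoeff_zero constantCoeff_log]

theorem logOf_pow {f : A⟦X⟧} (hf : constantCoeff f = 1) (n : ℕ) :
    logOf (f ^ n) = n • logOf f := by
  induction n with
  | zero => rw [pow_zero, logOf_one, zero_smul]
  | succ n ih => rw [pow_succ, logOf_mul (by simp [hf]) hf, ih, succ_nsmul]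

theorem logOf_exp_subst {T : A⟦X⟧} (hT : constantCoeff T = 0) :
    logOf ((exp A).subst T) = T := by
  refine logOf_eq_of_derivative_eq_mul
    (by rw [constantCoeff_subst_of_constantCoeff_eq_zero hT, constantCoeff_exp]) hT ?_
  rw [derivative_subst (HasSubst.of_constantCoeff_zero' hT), derivative_exp]

end Log

theorem comp_eq_subst {f g : ℚ⟦X⟧} (hg : constantCoeff g = 0) : f.comp g = f.subst g := by
  ext n
  rw [coeff_subst' (HasSubst.of_constantCoeff_zero' hg),
    finsum_eq_sum_of_support_subset (s := Finset.range (n + 1))]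
  · simp [PowerSeries.comp]
  · intro d hd
    by_contra hdn
    simp only [Finset.coe_range, Set.mem_Iio, not_lt] at hdn
    exact hd (by simp only [coeff_pow_eq_zero_of_lt hg (by omega : n < d), smul_zero])

end PowerSeries

theorem logOnePlusX_eq_log : logOnePlusX = log ℚ := by
  ext (_ | n)
  · simp [logOnePlusX]
  · simp [logOnePlusX, pow_succ]

theorem mul_pPoly (k : ℕ) (u : ℚ⟦X⟧) : u * pPoly k u = (1 + u) ^ k - 1 := by
  rw [add_comm, add_pow, Finset.sum_range_succ', pPoly, Finset.mul_sum]
  simp only [one_pow, mul_one, pow_zero, Nat.choose_zero_right, Nat.cast_one,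
    add_sub_cancel_right]
  refine Finset.sum_congr rfl fun j _ ↦ ?_
  rw [map_natCast]
  ring

theorem constantCoeff_pPoly (k : ℕ) {u : ℚ⟦X⟧} (hu : constantCoeff u = 0) :
    constantCoeff (pPoly k u) = k := by
  rcases Nat.eq_zero_or_pos k with rfl | hk
  · simp [pPoly]
  · rw [pPoly, map_sum, Finset.sum_eq_single_of_mem 0 (Finset.mem_range.mpr hk)]
    · simp
    · intro j _ hj
      simp [hu, hj]

theorem pPoly_ne_zero {k : ℕ} (hk : 0 < k) {u : ℚ⟦X⟧} (hu : constantCoeff u = 0) :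
    pPoly k u ≠ 0 := fun h ↦ by
  have := constantCoeff_pPoly k hu
  rw [h, map_zero] at this
  exact hk.ne' (by exact_mod_cast this.symm)

theorem pPoly_X_subst (k : ℕ) {u : ℚ⟦X⟧} (hu : HasSubst u) :
    (pPoly k X).subst u = pPoly k u := by
  simp [pPoly, ← coe_substAlgHom hu, substAlgHom_X]

theorem X_mul_pPoly_X_mem_range (k : ℕ) :
    X * pPoly k X ∈ (map (Int.castRingHom ℚ)).range := by
  have hX : (X : ℚ⟦X⟧) ∈ (map (Int.castRingHom ℚ)).range := ⟨X, map_X _⟩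
  refine mul_mem hX (Subring.sum_mem _ fun j _ ↦ mul_mem ?_ (pow_mem hX j))
  exact ⟨C (k.choose (j + 1) : ℤ), by simp⟩

theorem invSeries_mul_pPoly {k : ℕ} (hk : 0 < k) :
    invSeries k * pPoly k X = (k : ℚ⟦X⟧) * log ℚ := by
  have hp : constantCoeff (pPoly k X) ≠ 0 := by
    rw [constantCoeff_pPoly k constantCoeff_X]
    exact_mod_cast hk.ne'
  rw [invSeries, mul_assoc, PowerSeries.inv_mul_cancel _ hp, mul_one, map_natCast,
    logOnePlusX_eq_log]

theorem constantCoeff_invSeries (k : ℕ) : constantCoeff (invSeries k) = 0 := by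
  rw [invSeries, logOnePlusX_eq_log, map_mul, map_mul, constantCoeff_log, mul_zero, zero_mul]

theorem natCast_mul_log_subst {k : ℕ} {A : ℚ⟦X⟧} (h0 : constantCoeff A = 0)
    (hA : (1 + A) ^ k = (X * pPoly k A).expOf) :
    (k : ℚ⟦X⟧) * (log ℚ).subst A = X * pPoly k A := by
  have hT : constantCoeff (X * pPoly k A) = 0 := by simp
  rw [← logOf_one_add, ← nsmul_eq_mul, ← logOf_pow (by simp [h0]), hA, expOf,
    comp_eq_subst hT, logOf_exp_subst hT]

theorem invSeries_subst {k : ℕ} (hk : 0 < k) {A : ℚ⟦X⟧} (h0 : constantCoeff A = 0)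
    (hA : (1 + A) ^ k = (X * pPoly k A).expOf) : (invSeries k).subst A = X := by
  have hsub : HasSubst A := HasSubst.of_constantCoeff_zero' h0
  refine mul_right_cancel₀ (pPoly_ne_zero hk h0) ?_
  calc (invSeries k).subst A * pPoly k A = (invSeries k * pPoly k X).subst A := by
        rw [subst_mul hsub, pPoly_X_subst k hsub]
    _ = k * (log ℚ).subst A := by
        rw [invSeries_mul_pPoly hk, ← coe_substAlgHom hsub, map_mul, map_natCast]
    _ = X * pPoly k A := natCast_mul_log_subst h0 hA

theorem invSeries_eq_X_mul_comp {k : ℕ} (hk : 0 < k) {F : ℚ⟦X⟧} (hF : logOnePlusX = X * F) :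
    invSeries k = X * F.comp (X * pPoly k X) := by
  have hY : constantCoeff (X * pPoly k X) = 0 := by simp
  have hsub : HasSubst (X * pPoly k X) := HasSubst.of_constantCoeff_zero' hY
  refine mul_right_cancel₀ (pPoly_ne_zero hk constantCoeff_X) ?_
  calc invSeries k * pPoly k X = k • logOf (1 + X) := by
        rw [invSeries_mul_pPoly hk, logOf_one_add_X, nsmul_eq_mul]
    _ = (X * F).subst (X * pPoly k X) := by
        rw [← logOf_pow (by simp), logOf, mul_pPoly, ← logOnePlusX_eq_log, hF]
    _ = X * F.comp (X * pPoly k X) * pPoly k X := by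
        rw [subst_mul hsub, subst_X hsub, comp_eq_subst hY]
        ring

theorem isHurwitz_logOnePlusX : IsHurwitz logOnePlusX := by
  rintro (_ | n)
  · exact ⟨0, by simp [logOnePlusX]⟩
  · refine ⟨(-1) ^ n * n.factorial, ?_⟩
    simp only [logOnePlusX, coeff_mk, Nat.add_sub_cancel, Nat.factorial_succ]
    push_cast
    field_simp

theorem isHurwitz_X_mul_comp {F G : ℚ⟦X⟧} (hF : IsHurwitz (X * F))
    (hG : G ∈ (map (Int.castRingHom ℚ)).range) : IsHurwitz (X * F.comp G) := by
  choose c hc using hF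
  choose P hP using fun j : ℕ ↦ pow_mem hG j
  rintro (_ | n)
  · exact ⟨0, by simp⟩
  refine ⟨∑ j ∈ Finset.range (n + 1),
    ((n + 1).factorial / (j + 1).factorial : ℕ) * c (j + 1) * coeff n (P j), ?_⟩
  rw [coeff_succ_X_mul, PowerSeries.comp, coeff_mk, Finset.mul_sum]
  simp only [Int.cast_sum, Int.cast_mul, Int.cast_natCast]
  refine Finset.sum_congr rfl fun j hj ↦ ?_
  have hjn : j + 1 ≤ n + 1 := by simpa using hj
  rw [← hc (j + 1), coeff_succ_X_mul, ← hP j, coeff_map, eq_intCast,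
    Nat.cast_div (Nat.factorial_dvd_factorial hjn) (by positivity)]
  field_simp

/-- For a positive integer `k`, the compositional inverse of the series `A` with
`A(0) = 0` satisfying `(1+A)^k = e^{x·p_k(A)}` is `k·x·log(1+x)/((1+x)^k - 1)`;
hence the latter is a Hurwitz series. -/
theorem generalized_inverse (k : ℕ) (hk : 0 < k) (A : PowerSeries ℚ)
    (h0 : PowerSeries.constantCoeff A = 0)
    (hA : (1 + A) ^ k = PowerSeries.expOf (PowerSeries.X * pPoly k A)) :
    PowerSeries.comp A (invSeries k) = PowerSeries.X ∧
    PowerSeries.comp (invSeries k) A = PowerSeries.X ∧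
    IsHurwitz (invSeries k) := by
  have hinv : (invSeries k).subst A = X := invSeries_subst hk h0 hA
  obtain ⟨F, hF⟩ := X_dvd_iff.mpr (logOnePlusX_eq_log ▸ constantCoeff_log)
  refine ⟨?_, ?_, ?_⟩
  · rw [comp_eq_subst (constantCoeff_invSeries k)]
    exact subst_eq_X_of_subst_eq_X h0 hinv
  · rw [comp_eq_subst h0, hinv]
  · rw [invSeries_eq_X_mul_comp hk hF]
    exact isHurwitz_X_mul_comp (hF ▸ isHurwitz_logOnePlusX) (X_mul_pPoly_X_mem_range k)
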